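/- arXiv:1509.03209 — 4 statements merged into one kernel-verified Lean document; each statement's English description precedes it below -/
import Mathlib

section
/- The polynomial 24z^6 + 60z^5 + 66z^4 + 38z^3 + 11z^2 - 1 has a root in the interval (0.210, 0.211), and consequently the connective constant μ = 1/z* of K₂ * K₃ * K₄ lies in (4.74, 4.76). -/
/-- The polynomial `24z⁶ + 60z⁵ + 66z⁴ + 38z³ + 11z² - 1` has a root in `(0.210, 0.211)`,
and consequently the connective constant `μ = 1/z*` of `K₂ * K₃ * K₄` lies in `(4.74, 4.76)`. -/
theorem root_K2_K3_K4 :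
    ∃ z ∈ Set.Ioo (0.210 : ℝ) 0.211,
      24 * z ^ 6 + 60 * z ^ 5 + 66 * z ^ 4 + 38 * z ^ 3 + 11 * z ^ 2 - 1 = 0 ∧
      1 / z ∈ Set.Ioo (4.74 : ℝ) 4.76 := by
  set f : ℝ → ℝ := fun z => 24 * z ^ 6 + 60 * z ^ 5 + 66 * z ^ 4 + 38 * z ^ 3 + 11 * z ^ 2 - 1 with hf
  have hc : ContinuousOn f (Set.Icc (0.2101 : ℝ) 0.2109) := by
    apply Continuous.continuousOn; continuity
  have h1 : f 0.2101 < 0 := by norm_num [hf]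
  have h2 : (0 : ℝ) < f 0.2109 := by norm_num [hf]
  have hle : (0.2101 : ℝ) ≤ 0.2109 := by norm_num
  obtain ⟨z, hz, hfz⟩ := intermediate_value_Ioo hle hc (Set.mem_Ioo.mpr ⟨h1, h2⟩)
  obtain ⟨hz1, hz2⟩ := hz
  refine ⟨z, ⟨by linarith, by linarith⟩, hfz.symm ▸ rfl, ?_, ?_⟩
  · rw [lt_div_iff₀ (by linarith : (0:ℝ) < z)]
    nlinarith
  · rw [div_lt_iff₀ (by linarith : (0:ℝ) < z)]
    nlinarith
end

section
/- For complex z with |z| small enough (strictly less than the radius of convergence of M and with 1 + Mᵢ(z) ≠ 0 for all i), the generating function of self-avoiding walks on a free product of graphs satisfies M(z) = 1 / (1 − Σᵢ Mᵢ(z)/(1 + Mᵢ(z))). -/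
open Filter Topology

/-- A valid word in the free product: letters are non-root vertices of the factors,
no two consecutive letters from the same factor. -/
def ValidWord {r : ℕ} {V : Fin r → Type} (o : ∀ i, V i) (l : List (Σ i, V i)) : Prop :=
  (∀ x ∈ l, x.2 ≠ o x.1) ∧ l.Chain' (fun a b => a.1 ≠ b.1)

/-- The vertex set of the free product of rooted graphs: the set of valid words. -/
def FPV {r : ℕ} (V : Fin r → Type) (o : ∀ i, V i) : Type :=
  {l : List (Σ i, V i) // ValidWord o l}

/-- The edge relation of the free product on raw words: `w x` is adjacent to `w y`
whenever `x, y` belong to the same factor (where `x` or `y` may be the root, i.e.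
the empty extension) and are adjacent there. -/
def RawAdj {r : ℕ} {V : Fin r → Type} (G : ∀ i, SimpleGraph (V i)) (o : ∀ i, V i) :
    List (Σ i, V i) → List (Σ i, V i) → Prop := fun a b =>
  (∃ (w : List (Σ i, V i)) (i : Fin r) (x y : V i),
      (G i).Adj x y ∧ a = w ++ [⟨i, x⟩] ∧ b = w ++ [⟨i, y⟩])
  ∨ (∃ (i : Fin r) (y : V i), (G i).Adj (o i) y ∧ b = a ++ [⟨i, y⟩])
  ∨ (∃ (i : Fin r) (y : V i), (G i).Adj (o i) y ∧ a = b ++ [⟨i, y⟩])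

/-- The free product `G₁ * ⋯ * G_r` of rooted graphs. -/
def freeProd {r : ℕ} {V : Fin r → Type} (G : ∀ i, SimpleGraph (V i)) (o : ∀ i, V i) :
    SimpleGraph (FPV V o) :=
  SimpleGraph.fromRel (fun a b => RawAdj G o a.1 b.1)

/-- The root (empty word) of the free product. -/
def fpRoot {r : ℕ} (V : Fin r → Type) (o : ∀ i, V i) : FPV V o :=
  ⟨[], fun x hx => absurd hx List.not_mem_nil, List.isChain_nil⟩

/-- `sawCount G v n` is the number of self-avoiding walks of length `n` in `G` starting at `v`,
i.e. paths `[v₀, …, vₙ]` with `v₀ = v`, consecutive vertices adjacent, and no repeated vertex. -/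
noncomputable def sawCount {V : Type*} (G : SimpleGraph V) (v : V) (n : ℕ) : ℕ :=
  Set.ncard {l : List V | l.length = n + 1 ∧ l.head? = some v ∧ l.Chain' G.Adj ∧ l.Nodup}

/-- A graph is quasi-transitive if its automorphism group acts with finitely many orbits. -/
def QuasiTransitive {V : Type*} (G : SimpleGraph V) : Prop :=
  ∃ s : Finset V, ∀ v : V, ∃ φ : G ≃g G, φ v ∈ s

/-- A graph is locally finite if every vertex has finitely many neighbours. -/
def LocFinite {V : Type*} (G : SimpleGraph V) : Prop := ∀ v, (G.neighborSet v).Finite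

/-- `sawCountVia G o i n` counts self-avoiding walks of length `n` in the free product
starting at the root whose first step enters the copy of the `i`-th factor
(equivalently, which visit `Vᵢ \ {oᵢ}`). -/
noncomputable def sawCountVia {r : ℕ} {V : Fin r → Type} (G : ∀ i, SimpleGraph (V i))
    (o : ∀ i, V i) (i : Fin r) (n : ℕ) : ℕ :=
  Set.ncard {l : List (FPV V o) |
    l.length = n + 1 ∧ l.head? = some (fpRoot V o) ∧ l.Chain' (freeProd G o).Adj ∧ l.Nodup ∧
    ∃ (v : FPV V o) (x : V i), l[1]? = some v ∧ v.1 = [⟨i, x⟩]}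

/-!
A self-avoiding walk from the root of `G₁ * ⋯ * G_r` starts in one factor `i`. It first runs
through a self-avoiding walk of `G i` from `o i`, visiting one-letter words `[x]`; once it appends
a second letter to `[x]` it can never come back, because `[x]` is then a visited cut vertex, so
the rest is a root walk that does not start in factor `i`, shifted by the prefix `x`. Writing
`Bᵢ` for the generating function of walks starting in factor `i`, this gives `M = 1 + Σᵢ Bᵢ` and
`Bᵢ = Mᵢ (M - Bᵢ)`, whose solution is the claimed formula.
-/

section RawAdj

variable {r : ℕ} {V : Fin r → Type} {G : ∀ i, SimpleGraph (V i)} {o : ∀ i, V i}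
  {a b w : List (Σ i, V i)}

theorem RawAdj.symm (h : RawAdj G o a b) : RawAdj G o b a := by
  rcases h with ⟨w, i, x, y, hxy, rfl, rfl⟩ | ⟨i, y, hy, rfl⟩ | ⟨i, y, hy, rfl⟩
  · exact Or.inl ⟨w, i, y, x, hxy.symm, rfl, rfl⟩
  · exact Or.inr (Or.inr ⟨i, y, hy, rfl⟩)
  · exact Or.inr (Or.inl ⟨i, y, hy, rfl⟩)

theorem RawAdj.ne (h : RawAdj G o a b) : a ≠ b := by
  rcases h with ⟨w, i, x, y, hxy, rfl, rfl⟩ | ⟨i, y, hy, rfl⟩ | ⟨i, y, hy, rfl⟩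
  · simpa using hxy.ne
  · simp
  · simp

theorem freeProd_adj_iff {a b : FPV V o} : (freeProd G o).Adj a b ↔ RawAdj G o a.1 b.1 :=
  ⟨fun ⟨_, h⟩ => h.elim id RawAdj.symm,
    fun h => ⟨fun hab => h.ne (congrArg Subtype.val hab), Or.inl h⟩⟩

theorem rawAdj_nil_left_iff : RawAdj G o [] b ↔ ∃ i y, (G i).Adj (o i) y ∧ b = [⟨i, y⟩] := by
  constructor
  · rintro (⟨w, i, x, y, -, h, -⟩ | ⟨i, y, hy, rfl⟩ | ⟨i, y, -, h⟩)
    · simp at h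
    · exact ⟨i, y, hy, rfl⟩
    · simp at h
  · rintro ⟨i, y, hy, rfl⟩
    exact Or.inr (Or.inl ⟨i, y, hy, rfl⟩)

theorem rawAdj_singleton_iff {i : Fin r} {x y : V i} :
    RawAdj G o [⟨i, x⟩] [⟨i, y⟩] ↔ (G i).Adj x y := by
  constructor
  · rintro (⟨w, j, x', y', hxy, ha, hb⟩ | ⟨j, y', -, h⟩ | ⟨j, y', -, h⟩)
    · obtain ⟨rfl, ha⟩ := List.append_inj' (ha.symm.trans (List.nil_append _).symm) rfl
      obtain ⟨-, hb⟩ := List.append_inj' (hb.symm.trans (List.nil_append _).symm) rfl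
      obtain ⟨rfl, hx⟩ := Sigma.mk.inj_iff.mp (List.singleton_injective ha)
      obtain ⟨-, hy⟩ := Sigma.mk.inj_iff.mp (List.singleton_injective hb)
      cases hx; cases hy
      exact hxy
    · simp at h
    · simp at h
  · exact fun h => Or.inl ⟨[], i, x, y, h, rfl, rfl⟩

theorem RawAdj.cons (s : Σ i, V i) (h : RawAdj G o a b) : RawAdj G o (s :: a) (s :: b) := by
  rcases h with ⟨w, i, x, y, hxy, rfl, rfl⟩ | ⟨i, y, hy, rfl⟩ | ⟨i, y, hy, rfl⟩
  · exact Or.inl ⟨s :: w, i, x, y, hxy, rfl, rfl⟩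
  · exact Or.inr (Or.inl ⟨i, y, hy, rfl⟩)
  · exact Or.inr (Or.inr ⟨i, y, hy, rfl⟩)

theorem RawAdj.of_cons {s : Σ i, V i} (h : RawAdj G o (s :: a) (s :: b)) (hb : b ≠ []) :
    RawAdj G o a b := by
  rcases h with ⟨_ | ⟨s', w⟩, i, x, y, hxy, ha, hb'⟩ | ⟨i, y, hy, h⟩ | ⟨i, y, hy, h⟩
  · simp_all
  · simp only [List.cons_append, List.cons.injEq] at ha hb'
    exact Or.inl ⟨w, i, x, y, hxy, ha.2, hb'.2⟩
  · exact Or.inr (Or.inl ⟨i, y, hy, (List.cons.inj h).2⟩)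
  · exact Or.inr (Or.inr ⟨i, y, hy, (List.cons.inj h).2⟩)

theorem RawAdj.cases_of_concat {s : Σ i, V i} (h : RawAdj G o (w ++ [s]) b) :
    (∃ s', s'.1 = s.1 ∧ b = w ++ [s']) ∨ (∃ s', b = w ++ [s, s']) ∨ b = w := by
  rcases h with ⟨w', i, x, y, -, ha, rfl⟩ | ⟨i, y, -, rfl⟩ | ⟨i, y, -, ha⟩
  · obtain ⟨rfl, hs⟩ := List.append_inj' ha rfl
    obtain rfl := List.singleton_injective hs
    exact Or.inl ⟨⟨i, y⟩, rfl, rfl⟩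
  · exact Or.inr (Or.inl ⟨⟨i, y⟩, by simp⟩)
  · exact Or.inr (Or.inr (List.append_inj' ha rfl).1.symm)

end RawAdj

section Walks

variable {α : Type*}

def walkTails (R : α → α → Prop) (v : α) (n : ℕ) : Set (List α) :=
  {u | u.length = n ∧ (v :: u).IsChain R ∧ (v :: u).Nodup}

theorem setOf_walk_eq_image_cons (R : α → α → Prop) (v : α) (n : ℕ) (P : List α → Prop) :
    {l : List α | l.length = n + 1 ∧ l.head? = some v ∧ l.IsChain R ∧ l.Nodup ∧ P l} =
      List.cons v '' {u | u ∈ walkTails R v n ∧ P (v :: u)} := by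
  ext (_ | ⟨a, u⟩)
  · simp
  · constructor
    · rintro ⟨hlen, hhead, hchain, hnd, hP⟩
      obtain rfl : a = v := by simpa using hhead
      exact ⟨u, ⟨⟨by simpa using hlen, hchain, hnd⟩, hP⟩, rfl⟩
    · rintro ⟨u, ⟨⟨hlen, hchain, hnd⟩, hP⟩, hu⟩
      obtain ⟨rfl, rfl⟩ := List.cons.inj hu
      exact ⟨by simpa using hlen, rfl, hchain, hnd, hP⟩

theorem walkTails_zero (R : α → α → Prop) (v : α) : walkTails R v 0 = {[]} := by
  ext u
  refine ⟨fun hu => List.eq_nil_of_length_eq_zero hu.1, ?_⟩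
  rintro rfl
  exact ⟨rfl, List.isChain_singleton _, List.nodup_singleton _⟩

theorem sawCount_eq_ncard_walkTails {W : Type*} (H : SimpleGraph W) (v : W) (n : ℕ) :
    sawCount H v n = (walkTails H.Adj v n).ncard := by
  have h := setOf_walk_eq_image_cons H.Adj v n (fun _ => True)
  simp only [and_true, Set.ofPred_mem_eq] at h
  exact (congrArg Set.ncard h).trans (Set.ncard_image_of_injective _ List.cons_injective)

theorem finite_walkTails {R : α → α → Prop} (hR : ∀ a, {b | R a b}.Finite) (v : α) (n : ℕ) :
    (walkTails R v n).Finite := by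
  induction n generalizing v with
  | zero => exact (Set.finite_singleton []).subset fun u hu => List.eq_nil_of_length_eq_zero hu.1
  | succ n ih =>
    refine ((hR v).biUnion fun b _ => (ih b).image (List.cons b)).subset ?_
    rintro (_ | ⟨b, u⟩) ⟨hlen, hchain, hnd⟩
    · simp at hlen
    · exact Set.mem_biUnion (List.isChain_cons_cons.mp hchain).1
        ⟨u, ⟨by simpa using hlen, (List.isChain_cons_cons.mp hchain).2, hnd.of_cons⟩, rfl⟩

end Walks

section RootWalks

variable {r : ℕ} {V : Fin r → Type} {G : ∀ i, SimpleGraph (V i)} {o : ∀ i, V i}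

def branch (w : List (Σ i, V i)) (j : Fin r) : Set (List (Σ i, V i)) :=
  {c | ∃ s rest, s.1 = j ∧ c = w ++ s :: rest}

/-- The parent `w` is a cut vertex: it separates the branch of `w ++ [s]` from the rest. -/
theorem isChain_rawAdj_subset_branch {l : List (List (Σ i, V i))} {w : List (Σ i, V i)}
    {s : Σ i, V i} : ((w ++ [s]) :: l).IsChain (RawAdj G o) → ((w ++ [s]) :: l).Nodup →
      w ∉ l → ∀ c ∈ (w ++ [s]) :: l, c ∈ branch w s.1 := by
  induction l generalizing w s with
  | nil => intro _ _ _; simpa using ⟨s, [], rfl, rfl⟩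
  | cons b t ih =>
    intro hchain hnd hw c hc
    obtain ⟨hab, hchain⟩ := List.isChain_cons_cons.mp hchain
    rcases List.mem_cons.mp hc with rfl | hc
    · exact ⟨s, [], rfl, rfl⟩
    rcases hab.cases_of_concat with ⟨s', hs', rfl⟩ | ⟨s', rfl⟩ | rfl
    · exact hs' ▸ ih hchain hnd.of_cons (fun h => hw (List.mem_cons_of_mem _ h)) c hc
    · have e : w ++ [s, s'] = (w ++ [s]) ++ [s'] := by simp
      rw [e] at hchain hnd hc
      obtain ⟨s'', rest, -, rfl⟩ :=
        ih hchain hnd.of_cons (fun h => (List.nodup_cons.mp hnd).1 (List.mem_cons_of_mem _ h)) c hc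
      exact ⟨s, s'' :: rest, rfl, by simp⟩
    · exact absurd List.mem_cons_self hw

/-- Self-avoiding walks from the root of the free product, as lists of raw words with the root
`[]` omitted. -/
def rootWalks (G : ∀ i, SimpleGraph (V i)) (o : ∀ i, V i) (n : ℕ) :
    Set (List (List (Σ i, V i))) :=
  {u | u ∈ walkTails (RawAdj G o) [] n ∧ ∀ w ∈ u, ValidWord o w}

def rootWalksVia (G : ∀ i, SimpleGraph (V i)) (o : ∀ i, V i) (i : Fin r) (n : ℕ) :
    Set (List (List (Σ i, V i))) :=
  {u | u ∈ rootWalks G o n ∧ ∃ x, u.head? = some [⟨i, x⟩]}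

theorem rootWalksVia_subset (i : Fin r) (n : ℕ) : rootWalksVia G o i n ⊆ rootWalks G o n :=
  fun _ hu => hu.1

theorem exists_head_of_mem_walkTails {u : List (List (Σ i, V i))} {n : ℕ}
    (hu : u ∈ walkTails (RawAdj G o) [] n) (hn : n ≠ 0) :
    ∃ i y, (G i).Adj (o i) y ∧ u.head? = some [⟨i, y⟩] := by
  obtain ⟨hlen, hchain, -⟩ := hu
  obtain _ | ⟨a, u⟩ := u
  · exact absurd hlen.symm hn
  · obtain ⟨i, y, hy, rfl⟩ := rawAdj_nil_left_iff.mp (List.isChain_cons_cons.mp hchain).1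
    exact ⟨i, y, hy, rfl⟩

theorem mem_branch_of_mem_walkTails {u : List (List (Σ i, V i))} {n : ℕ} {s : Σ i, V i}
    (hu : u ∈ walkTails (RawAdj G o) [] n) (hs : u.head? = some [s]) :
    ∀ c ∈ u, c ∈ branch [] s.1 := by
  obtain ⟨-, hchain, hnd⟩ := hu
  obtain _ | ⟨a, u⟩ := u
  · simp
  · obtain rfl : a = [] ++ [s] := by simpa using hs
    exact isChain_rawAdj_subset_branch hchain.tail hnd.of_cons
      fun h => (List.nodup_cons.mp hnd).1 (List.mem_cons_of_mem _ h)

/-- `Subtype.val` with domain `FPV V o`, so that rewriting under `List.map` does not unfold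
`FPV`. -/
def FPV.word (v : FPV V o) : List (Σ i, V i) := v.1

theorem FPV.word_injective : Function.Injective (FPV.word (V := V) (o := o)) :=
  fun _ _ => Subtype.ext

theorem map_word_mem_walkTails {u : List (FPV V o)} {n : ℕ} :
    u.map FPV.word ∈ walkTails (RawAdj G o) [] n ↔
      u ∈ walkTails (freeProd G o).Adj (fpRoot V o) n := by
  have hadj : (freeProd G o).Adj = fun a b => RawAdj G o a.word b.word := by
    ext; exact freeProd_adj_iff
  have hroot : ([] : List (Σ i, V i)) :: u.map FPV.word = (fpRoot V o :: u).map FPV.word := rfl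
  simp only [walkTails, Set.mem_ofPred_eq]
  rw [List.length_map, hroot, List.isChain_map, List.nodup_map_iff FPV.word_injective, hadj]

theorem rootWalks_subset_range (n : ℕ) :
    rootWalks G o n ⊆ Set.range (List.map (FPV.word (V := V) (o := o))) :=
  fun u hu => ⟨u.pmap (fun w hw => (⟨w, hw⟩ : FPV V o)) hu.2,
    (List.map_pmap ..).trans (List.pmap_eq_self.mpr fun _ _ => rfl)⟩

theorem sawCount_freeProd_eq (n : ℕ) :
    sawCount (freeProd G o) (fpRoot V o) n = (rootWalks G o n).ncard := by
  rw [sawCount_eq_ncard_walkTails, ← Set.ncard_preimage_of_injective_subset_range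
    (List.map_injective_iff.mpr FPV.word_injective) (rootWalks_subset_range n)]
  congr 1
  ext u
  exact ⟨fun h => ⟨map_word_mem_walkTails.mpr h, List.forall_mem_map.mpr fun w _ => w.2⟩,
    fun h => map_word_mem_walkTails.mp h.1⟩

theorem sawCountVia_eq (i : Fin r) (n : ℕ) :
    sawCountVia G o i n = (rootWalksVia G o i n).ncard := by
  have h := setOf_walk_eq_image_cons (freeProd G o).Adj (fpRoot V o) n
    (fun l => ∃ (v : FPV V o) (x : V i), l[1]? = some v ∧ v.1 = [⟨i, x⟩])
  refine (congrArg Set.ncard h).trans ?_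
  rw [Set.ncard_image_of_injective _ List.cons_injective,
    ← Set.ncard_preimage_of_injective_subset_range
      (List.map_injective_iff.mpr FPV.word_injective)
      ((rootWalksVia_subset i n).trans (rootWalks_subset_range n))]
  congr 1
  ext u
  have hhead : (u.map FPV.word).head? = (fpRoot V o :: u)[1]?.map FPV.word := by
    rw [List.head?_map, List.getElem?_cons_succ, List.head?_eq_getElem?]
  constructor
  · rintro ⟨hu, v, x, hv, hvx⟩
    refine ⟨⟨map_word_mem_walkTails.mpr hu, List.forall_mem_map.mpr fun w _ => w.2⟩, x, ?_⟩
    rw [hhead, hv, Option.map_some]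
    exact congrArg some hvx
  · rintro ⟨⟨hu, -⟩, x, hx⟩
    rw [hhead, Option.map_eq_some_iff] at hx
    obtain ⟨v, hv, hvx⟩ := hx
    exact ⟨map_word_mem_walkTails.mp hu, v, x, hv, hvx⟩

end RootWalks

section Embeddings

variable {r : ℕ} {V : Fin r → Type} {G : ∀ i, SimpleGraph (V i)} {o : ∀ i, V i}

theorem validWord_nil : ValidWord o [] := ⟨by simp, List.isChain_nil⟩

theorem validWord_cons_iff {s : Σ i, V i} {c : List (Σ i, V i)} :
    ValidWord o (s :: c) ↔ s.2 ≠ o s.1 ∧ (∀ s' ∈ c.head?, s.1 ≠ s'.1) ∧ ValidWord o c := by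
  have h : List.IsChain (fun a b : Σ i, V i => a.1 ≠ b.1) (s :: c) ↔ _ := List.isChain_cons
  simp only [ValidWord, List.mem_cons, forall_eq_or_imp]
  exact ⟨fun ⟨⟨h1, h2⟩, h3⟩ => ⟨h1, (h.mp h3).1, h2, (h.mp h3).2⟩,
    fun ⟨h1, h2, h3, h4⟩ => ⟨⟨h1, h3⟩, h.mpr ⟨h2, h4⟩⟩⟩

theorem validWord_singleton_iff {i : Fin r} {y : V i} : ValidWord o [⟨i, y⟩] ↔ y ≠ o i := by
  simp [validWord_cons_iff, validWord_nil]

theorem rawAdj_nil_singleton_iff {i : Fin r} {y : V i} :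
    RawAdj G o [] [⟨i, y⟩] ↔ (G i).Adj (o i) y := by
  refine rawAdj_nil_left_iff.trans ⟨?_, fun h => ⟨i, y, h, rfl⟩⟩
  rintro ⟨j, y', hy', h⟩
  obtain ⟨rfl, h⟩ := Sigma.mk.inj_iff.mp (List.singleton_injective h)
  cases h
  exact hy'

theorem singleton_mk_injective (i : Fin r) :
    Function.Injective fun y : V i => ([⟨i, y⟩] : List (Σ i, V i)) :=
  fun _ _ h => by simpa using h

theorem isChain_map_singleton_iff {i : Fin r} {u : List (V i)} :
    ([] :: u.map fun y => [⟨i, y⟩]).IsChain (RawAdj G o) ↔ (o i :: u).IsChain (G i).Adj := by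
  cases u with
  | nil => simp
  | cons y u =>
    rw [List.map_cons, List.isChain_cons_cons, List.isChain_cons_cons, rawAdj_nil_singleton_iff]
    exact and_congr_right fun _ =>
      (List.isChain_map (fun y : V i => ([⟨i, y⟩] : List (Σ i, V i))) (l := y :: u)).trans
        (by simp only [rawAdj_singleton_iff])

theorem map_singleton_mem_rootWalks_iff {i : Fin r} {u : List (V i)} {n : ℕ} :
    u.map (fun y => [⟨i, y⟩]) ∈ rootWalks G o n ↔ u ∈ walkTails (G i).Adj (o i) n := by
  simp only [rootWalks, walkTails, Set.mem_ofPred_eq, List.length_map, isChain_map_singleton_iff,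
    List.nodup_cons, List.nodup_map_iff (singleton_mk_injective i), List.forall_mem_map,
    validWord_singleton_iff]
  have hnil : [] ∉ u.map fun y => ([⟨i, y⟩] : List (Σ i, V i)) := by simp
  have hroot : (∀ y ∈ u, y ≠ o i) ↔ o i ∉ u :=
    ⟨fun h hu => h _ hu rfl, fun h y hy hyo => h (hyo ▸ hy)⟩
  rw [hroot]
  tauto

theorem isChain_map_cons_iff {s : Σ i, V i} {a : List (Σ i, V i)}
    {l : List (List (Σ i, V i))} (hl : ∀ b ∈ l, b ≠ []) :
    ((a :: l).map (List.cons s)).IsChain (RawAdj G o) ↔ (a :: l).IsChain (RawAdj G o) := by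
  induction l generalizing a with
  | nil => simp
  | cons b l ih =>
    simp only [List.map_cons] at ih ⊢
    rw [List.isChain_cons_cons, List.isChain_cons_cons,
      ih fun c hc => hl c (List.mem_cons_of_mem _ hc)]
    exact and_congr_left fun _ => ⟨fun h => h.of_cons (hl b List.mem_cons_self), RawAdj.cons s⟩

end Embeddings

section Graft

variable {r : ℕ} {V : Fin r → Type} {G : ∀ i, SimpleGraph (V i)} {o : ∀ i, V i}

/-- The walk that runs through the factor walk `o i :: u` in the copy of `G i` at the root and
then through the root walk `[] :: t` shifted below its endpoint `[⟨i, u.getLastD (o i)⟩]`. -/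
def graft (o : ∀ i, V i) (i : Fin r) (u : List (V i)) (t : List (List (Σ i, V i))) :
    List (List (Σ i, V i)) :=
  u.map (fun y => [⟨i, y⟩]) ++ t.map (List.cons ⟨i, u.getLastD (o i)⟩)

theorem eq_cons_of_mem_rootWalks_diff {i : Fin r} {n : ℕ} {t : List (List (Σ i, V i))}
    (ht : t ∈ rootWalks G o n \ rootWalksVia G o i n) :
    ∀ c ∈ t, ∃ s rest, s.1 ≠ i ∧ c = s :: rest := by
  obtain ⟨⟨hwalk, hvalid⟩, hvia⟩ := ht
  rcases eq_or_ne n 0 with rfl | hn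
  · simp [List.eq_nil_of_length_eq_zero hwalk.1]
  obtain ⟨j, y, -, hhead⟩ := exists_head_of_mem_walkTails hwalk hn
  have hji : j ≠ i := by
    rintro rfl
    exact hvia ⟨⟨hwalk, hvalid⟩, y, hhead⟩
  intro c hc
  obtain ⟨s, rest, hs, rfl⟩ := mem_branch_of_mem_walkTails hwalk hhead c hc
  exact ⟨s, rest, hs ▸ hji, rfl⟩

theorem ne_nil_of_mem_rootWalks_diff {i : Fin r} {n : ℕ} {t : List (List (Σ i, V i))}
    (ht : t ∈ rootWalks G o n \ rootWalksVia G o i n) : ∀ c ∈ t, c ≠ [] := fun c hc => by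
  obtain ⟨s, rest, -, rfl⟩ := eq_cons_of_mem_rootWalks_diff ht c hc
  exact List.cons_ne_nil _ _

theorem validWord_of_mem_map_cons {i : Fin r} {x : V i} {n : ℕ} {t : List (List (Σ i, V i))}
    (hx : x ≠ o i) (ht : t ∈ rootWalks G o n \ rootWalksVia G o i n) :
    ∀ w ∈ t.map (List.cons ⟨i, x⟩), ValidWord o w := by
  intro w hw
  obtain ⟨c, hc, rfl⟩ := List.mem_map.mp hw
  obtain ⟨s, rest, hs, rfl⟩ := eq_cons_of_mem_rootWalks_diff ht c hc
  exact validWord_cons_iff.mpr ⟨hx, by simpa using hs.symm, ht.1.2 _ hc⟩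

theorem graft_mem_rootWalksVia {i : Fin r} {k l : ℕ} {u : List (V i)}
    {t : List (List (Σ i, V i))} (hu : u ∈ walkTails (G i).Adj (o i) (k + 1))
    (ht : t ∈ rootWalks G o l \ rootWalksVia G o i l) :
    graft o i u t ∈ rootWalksVia G o i (k + 1 + l) := by
  obtain ⟨⟨hulen, huchain, hund⟩, huvalid⟩ := map_singleton_mem_rootWalks_iff.mpr hu
  obtain ⟨y, u', rfl⟩ := List.exists_cons_of_ne_nil (List.ne_nil_of_length_eq_add_one hu.1)
  obtain ⟨z, hz⟩ : ∃ z, (y :: u').getLast? = some z := ⟨u'.getLast?.getD y, List.getLast?_cons⟩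
  have hzo : z ≠ o i := validWord_singleton_iff.mp
    (huvalid _ (List.mem_map_of_mem (List.mem_of_getLast? hz)))
  set A := (y :: u').map fun y => ([⟨i, y⟩] : List (Σ i, V i))
  set B := t.map (List.cons (⟨i, z⟩ : Σ i, V i))
  have hgraft : graft o i (y :: u') t = A ++ B := by
    rw [graft, List.getLastD_eq_getLast?, hz]
    rfl
  have hshift : ([⟨i, z⟩] :: B).IsChain (RawAdj G o) :=
    (isChain_map_cons_iff (a := []) (ne_nil_of_mem_rootWalks_diff ht)).mpr ht.1.1.2.1
  refine ⟨⟨⟨by rw [hgraft, List.length_append, hulen, List.length_map, ht.1.1.1], ?_, ?_⟩,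
    fun w hw => ?_⟩, y, by simp [hgraft, A]⟩
  · rw [hgraft, ← List.cons_append, List.isChain_append]
    refine ⟨huchain, hshift.tail, ?_⟩
    simp only [List.getLast?_cons, A, List.getLast?_map, hz, Option.map_some, Option.getD_some,
      Option.mem_def, Option.some.injEq, forall_eq']
    exact (List.isChain_cons.mp hshift).1
  · -- the words of `A` have length at most one, those of `B` at least two
    rw [hgraft, ← List.cons_append, List.nodup_append]
    refine ⟨hund, (List.nodup_map_iff List.cons_injective).mpr ht.1.1.2.2.of_cons, ?_⟩
    rintro a ha _ hb rfl
    obtain ⟨c, hc, rfl⟩ := List.mem_map.mp hb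
    obtain ⟨s, rest, -, rfl⟩ := eq_cons_of_mem_rootWalks_diff ht c hc
    rcases List.mem_cons.mp ha with h | h
    · simp at h
    · obtain ⟨y', -, h⟩ := List.mem_map.mp h
      simp at h
  · rw [hgraft] at hw
    exact (List.mem_append.mp hw).elim (huvalid w) (validWord_of_mem_map_cons hzo ht w)

end Graft

section Decomposition

open Finset.HasAntidiagonal

variable {r : ℕ} {V : Fin r → Type} {G : ∀ i, SimpleGraph (V i)} {o : ∀ i, V i}

theorem graft_inj {i : Fin r} {u u' : List (V i)} {t t' : List (List (Σ i, V i))}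
    (ht : ∀ c ∈ t, c ≠ []) (ht' : ∀ c ∈ t', c ≠ []) (h : graft o i u t = graft o i u' t') :
    u = u' ∧ t = t' := by
  have hcount : ∀ (u : List (V i)) (t : List (List (Σ i, V i))), (∀ c ∈ t, c ≠ []) →
      (graft o i u t).countP (fun c => c.length = 1) = u.length := by
    intro u t ht
    rw [graft, List.countP_append, List.countP_eq_length.mpr (by simp),
      List.countP_eq_zero.mpr, List.length_map, add_zero]
    simp only [List.mem_map, forall_exists_index, and_imp, forall_apply_eq_imp_iff₂,
      List.length_cons, decide_eq_true_eq, Nat.add_eq_right, List.length_eq_zero_iff]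
    exact ht
  have hlen : u.length = u'.length := by rw [← hcount u t ht, ← hcount u' t' ht', h]
  obtain ⟨hA, hB⟩ := List.append_inj h (by simpa using hlen)
  obtain rfl := List.map_injective_iff.mpr (singleton_mk_injective i) hA
  exact ⟨rfl, List.map_injective_iff.mpr List.cons_injective hB⟩

theorem exists_map_eq_of_forall_mem {α β : Type*} (f : α → β) {l : List β}
    (h : ∀ b ∈ l, ∃ a, f a = b) : ∃ l' : List α, l'.map f = l := by
  induction l with
  | nil => exact ⟨[], rfl⟩
  | cons b l ih =>
    obtain ⟨a, rfl⟩ := h b List.mem_cons_self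
    obtain ⟨l', rfl⟩ := ih fun c hc => h c (List.mem_cons_of_mem _ hc)
    exact ⟨a :: l', rfl⟩

theorem mem_rootWalks_of_append {n : ℕ} {t₁ t₂ : List (List (Σ i, V i))}
    (h : t₁ ++ t₂ ∈ rootWalks G o n) : t₁ ∈ rootWalks G o t₁.length :=
  ⟨⟨rfl, h.1.2.1.prefix ⟨t₂, rfl⟩, h.1.2.2.sublist (by simp)⟩,
    fun w hw => h.2 w (List.mem_append_left _ hw)⟩

theorem exists_mem_walkTails_map_singleton_eq {i : Fin r} {t : List (List (Σ i, V i))}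
    (ht : t ∈ rootWalks G o t.length) (hsing : ∀ c ∈ t, c.length = 1 ∧ c ∈ branch [] i) :
    ∃ u ∈ walkTails (G i).Adj (o i) t.length, u.map (fun y => [⟨i, y⟩]) = t := by
  obtain ⟨u, rfl⟩ := exists_map_eq_of_forall_mem (fun y : V i => ([⟨i, y⟩] : List (Σ i, V i)))
    fun c hc => by
      obtain ⟨hlen, ⟨j, y⟩, rest, rfl, rfl⟩ := hsing c hc
      obtain rfl : rest = [] := by simpa using hlen
      exact ⟨y, rfl⟩
  exact ⟨u, map_singleton_mem_rootWalks_iff.mp ht, rfl⟩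

theorem exists_mem_rootWalks_map_cons_eq {i : Fin r} {x : V i} {t : List (List (Σ i, V i))}
    (hchain : ([⟨i, x⟩] :: t).IsChain (RawAdj G o)) (hnd : ([⟨i, x⟩] :: t).Nodup)
    (hvalid : ∀ w ∈ t, ValidWord o w) (hhead : ∀ c ∈ t.head?, 1 < c.length) :
    ∃ t' ∈ rootWalks G o t.length \ rootWalksVia G o i t.length,
      t'.map (List.cons ⟨i, x⟩) = t := by
  rcases t with _ | ⟨c₀, t⟩
  · exact ⟨[], ⟨⟨⟨rfl, List.isChain_singleton _, List.nodup_singleton _⟩, by simp⟩,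
      fun h => by simpa using h.2⟩, rfl⟩
  obtain ⟨s, rfl⟩ : ∃ s, c₀ = [⟨i, x⟩, s] := by
    rcases RawAdj.cases_of_concat (w := []) (List.isChain_cons_cons.mp hchain).1 with
      ⟨s, -, rfl⟩ | ⟨s, rfl⟩ | rfl
    · simp at hhead
    · exact ⟨s, rfl⟩
    · simp at hhead
  have his : i ≠ s.1 := (validWord_cons_iff.mp (hvalid _ List.mem_cons_self)).2.1 s (by simp)
  have hbranch : ∀ c ∈ [⟨i, x⟩, s] :: t, c ∈ branch [⟨i, x⟩] s.1 :=
    isChain_rawAdj_subset_branch (w := [⟨i, x⟩]) hchain.tail hnd.of_cons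
      fun h => (List.nodup_cons.mp hnd).1 (List.mem_cons_of_mem _ h)
  obtain ⟨t', ht'⟩ := exists_map_eq_of_forall_mem (List.cons (⟨i, x⟩ : Σ i, V i)) fun c hc => by
    obtain ⟨s', rest, -, rfl⟩ := hbranch c hc
    exact ⟨s' :: rest, rfl⟩
  have ht'branch : ∀ c ∈ t', c ∈ branch [] s.1 := fun c hc => by
    obtain ⟨s', rest, hs', h⟩ := hbranch _ (ht' ▸ List.mem_map_of_mem hc)
    exact ⟨s', rest, hs', (List.cons.inj h).2⟩
  have ht'ne : ∀ c ∈ t', c ≠ [] := fun c hc => by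
    obtain ⟨s', rest, -, rfl⟩ := ht'branch c hc
    simp
  refine ⟨t', ⟨⟨⟨by rw [← ht', List.length_map], ?_, ?_⟩, ?_⟩, ?_⟩, ht'⟩
  · exact (isChain_map_cons_iff ht'ne).mp (by rw [List.map_cons, ht']; exact hchain)
  · exact List.nodup_cons.mpr ⟨fun h => ht'ne _ h rfl, List.Nodup.of_map _ (ht' ▸ hnd.of_cons)⟩
  · exact fun w hw => (validWord_cons_iff.mp (hvalid _ (ht' ▸ List.mem_map_of_mem hw))).2.2
  · rintro ⟨-, x', hx'⟩
    obtain ⟨s', rest, hs', h⟩ := ht'branch _ (List.mem_of_mem_head? hx')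
    obtain ⟨rfl, -⟩ := List.cons.inj h
    exact his hs'

/-- A walk starting in factor `i` stays in the copy of `G i` at the root exactly as long as it
visits words of length one. -/
theorem exists_concat_mem_walkTails_map_eq_takeWhile {i : Fin r} {n : ℕ}
    {t : List (List (Σ i, V i))} (ht : t ∈ rootWalksVia G o i n) :
    ∃ u z, u ++ [z] ∈ walkTails (G i).Adj (o i) (u.length + 1) ∧
      (u ++ [z]).map (fun y => [⟨i, y⟩]) = t.takeWhile (fun c => c.length = 1) := by
  obtain ⟨htw, x, hx⟩ := ht
  have hsplit := List.takeWhile_append_dropWhile (p := fun c : List (Σ i, V i) => c.length = 1)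
    (l := t)
  obtain ⟨u, hu, hut⟩ :=
    exists_mem_walkTails_map_singleton_eq (mem_rootWalks_of_append (hsplit ▸ htw)) fun c hc =>
      ⟨by simpa using List.mem_takeWhile_imp hc,
        mem_branch_of_mem_walkTails htw.1 hx c ((List.takeWhile_prefix _).subset hc)⟩
  rcases List.eq_nil_or_concat u with rfl | ⟨u', z, rfl⟩
  · obtain _ | ⟨a, t⟩ := t
    · simp at hx
    · obtain rfl : a = [⟨i, x⟩] := by simpa using hx
      simp at hut
  · rw [List.concat_eq_append] at hut hu
    refine ⟨u', z, ?_, hut⟩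
    simpa [← hut] using hu

theorem one_lt_length_of_mem_head?_dropWhile {i : Fin r} {n : ℕ} {t : List (List (Σ i, V i))}
    (ht : t ∈ rootWalksVia G o i n) :
    ∀ c ∈ (t.dropWhile fun c => c.length = 1).head?, 1 < c.length := by
  intro c hc
  have hp := List.head?_dropWhile_not (fun c : List (Σ i, V i) => c.length = 1) t
  rw [Option.mem_def.mp hc] at hp
  obtain ⟨htw, x, hx⟩ := ht
  obtain ⟨s, rest, -, rfl⟩ := mem_branch_of_mem_walkTails htw.1 hx c
    ((List.dropWhile_suffix _).subset (List.mem_of_mem_head? hc))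
  simpa [List.length_pos_iff] using hp

theorem exists_graft_eq {i : Fin r} {n : ℕ} {t : List (List (Σ i, V i))}
    (ht : t ∈ rootWalksVia G o i (n + 1)) :
    ∃ kl ∈ antidiagonal n, ∃ u ∈ walkTails (G i).Adj (o i) (kl.1 + 1),
      ∃ t' ∈ rootWalks G o kl.2 \ rootWalksVia G o i kl.2, graft o i u t' = t := by
  obtain ⟨u, z, hu, hut⟩ := exists_concat_mem_walkTails_map_eq_takeWhile ht
  set t₂ := t.dropWhile fun c => c.length = 1
  have hsplit : (u ++ [z]).map (fun y => [⟨i, y⟩]) ++ t₂ = t :=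
    hut ▸ List.takeWhile_append_dropWhile
  have hsuffix : ([⟨i, z⟩] :: t₂) <:+ [] :: t := by
    rw [← hsplit]
    exact ⟨[] :: u.map fun y => [⟨i, y⟩], by simp⟩
  have htw := ht.1
  obtain ⟨t', ht', ht't₂⟩ := exists_mem_rootWalks_map_cons_eq (htw.1.2.1.suffix hsuffix)
    (htw.1.2.2.sublist hsuffix.sublist) (fun w hw => htw.2 w ((List.dropWhile_suffix _).subset hw))
    (one_lt_length_of_mem_head?_dropWhile ht)
  refine ⟨(u.length, t₂.length), ?_, u ++ [z], hu, t', ht', ?_⟩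
  · have hlen := congrArg List.length hsplit
    simp only [List.length_append, List.length_map, List.length_singleton, htw.1.1] at hlen
    rw [mem_antidiagonal]
    omega
  · rw [graft, List.getLastD_concat, ht't₂, hsplit]

end Decomposition

section Counting

open Finset.HasAntidiagonal

variable {r : ℕ} {V : Fin r → Type} {G : ∀ i, SimpleGraph (V i)} {o : ∀ i, V i}

theorem rootWalks_zero : rootWalks G o 0 = {[]} := by
  ext t
  refine ⟨fun ht => walkTails_zero _ _ ▸ ht.1, ?_⟩
  rintro rfl
  exact ⟨walkTails_zero (RawAdj G o) [] ▸ rfl, by simp⟩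

theorem rootWalksVia_zero (i : Fin r) : rootWalksVia G o i 0 = ∅ := by
  ext t
  simp only [Set.mem_empty_iff_false, iff_false]
  rintro ⟨ht, x, hx⟩
  simp [List.eq_nil_of_length_eq_zero ht.1.1] at hx

theorem rootWalks_succ (n : ℕ) : rootWalks G o (n + 1) = ⋃ i, rootWalksVia G o i (n + 1) := by
  ext t
  simp only [Set.mem_iUnion]
  refine ⟨fun ht => ?_, fun ⟨i, ht⟩ => ht.1⟩
  obtain ⟨i, y, -, hy⟩ := exists_head_of_mem_walkTails ht.1 n.succ_ne_zero
  exact ⟨i, ht, y, hy⟩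

theorem pairwise_disjoint_rootWalksVia (n : ℕ) :
    Pairwise fun i j => Disjoint (rootWalksVia G o i n) (rootWalksVia G o j n) := by
  intro i j hij
  refine Set.disjoint_left.mpr fun t ⟨_, x, hx⟩ ⟨_, y, hy⟩ => hij ?_
  rw [hx, Option.some.injEq] at hy
  exact congrArg Sigma.fst (List.singleton_injective hy)

theorem rootWalksVia_succ (i : Fin r) (n : ℕ) :
    rootWalksVia G o i (n + 1) = ⋃ kl ∈ (antidiagonal n : Set (ℕ × ℕ)),
      (fun p => graft o i p.1 p.2) ''
        (walkTails (G i).Adj (o i) (kl.1 + 1) ×ˢ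
          (rootWalks G o kl.2 \ rootWalksVia G o i kl.2)) := by
  ext t
  simp only [Set.mem_iUnion, Finset.mem_coe, Set.mem_image, exists_prop]
  constructor
  · intro ht
    obtain ⟨kl, hkl, u, hu, t', ht', rfl⟩ := exists_graft_eq ht
    exact ⟨kl, hkl, (u, t'), ⟨hu, ht'⟩, rfl⟩
  · rintro ⟨kl, hkl, ⟨u, t'⟩, ⟨hu, ht'⟩, rfl⟩
    rw [← (mem_antidiagonal.mp hkl), add_right_comm]
    exact graft_mem_rootWalksVia hu ht'

theorem finite_rootWalks (hlf : ∀ i, LocFinite (G i)) (n : ℕ) : (rootWalks G o n).Finite := by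
  induction n using Nat.strong_induction_on with
  | _ n ih =>
    rcases n with _ | n
    · simp [rootWalks_zero]
    rw [rootWalks_succ]
    refine Set.finite_iUnion fun i => ?_
    rw [rootWalksVia_succ]
    refine (antidiagonal n).finite_toSet.biUnion fun kl hkl => Set.Finite.image _ ?_
    have hl : kl.2 < n + 1 := by have := mem_antidiagonal.mp hkl; omega
    exact (finite_walkTails (hlf i) _ _).prod ((ih kl.2 hl).sdiff)

theorem ncard_rootWalks_succ (hlf : ∀ i, LocFinite (G i)) (n : ℕ) :
    (rootWalks G o (n + 1)).ncard = ∑ i, (rootWalksVia G o i (n + 1)).ncard := by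
  rw [rootWalks_succ, Set.ncard_iUnion_of_finite
    (fun i => (finite_rootWalks hlf _).subset (rootWalksVia_subset i _))
    (pairwise_disjoint_rootWalksVia _), finsum_eq_sum_of_fintype]

theorem ncard_rootWalksVia_succ (hlf : ∀ i, LocFinite (G i)) (i : Fin r) (n : ℕ) :
    (rootWalksVia G o i (n + 1)).ncard = ∑ kl ∈ antidiagonal n,
      (walkTails (G i).Adj (o i) (kl.1 + 1)).ncard *
        ((rootWalks G o kl.2).ncard - (rootWalksVia G o i kl.2).ncard) := by
  have hinj : ∀ kl : ℕ × ℕ, Set.InjOn (fun p => graft o i p.1 p.2)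
      (walkTails (G i).Adj (o i) (kl.1 + 1) ×ˢ (rootWalks G o kl.2 \ rootWalksVia G o i kl.2)) :=
    fun kl p hp q hq h => Prod.ext_iff.mpr
      (graft_inj (ne_nil_of_mem_rootWalks_diff hp.2) (ne_nil_of_mem_rootWalks_diff hq.2) h)
  rw [rootWalksVia_succ, Set.Finite.ncard_biUnion (antidiagonal n).finite_toSet,
    finsum_mem_coe_finset]
  · refine Finset.sum_congr rfl fun kl _ => ?_
    rw [(hinj kl).ncard_image, Set.ncard_prod,
      Set.ncard_sdiff (rootWalksVia_subset i _)
        ((finite_rootWalks hlf _).subset (rootWalksVia_subset i _))]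
  · exact fun kl _ => ((finite_walkTails (hlf i) _ _).prod ((finite_rootWalks hlf _).sdiff)).image _
  · intro kl hkl kl' hkl' hne
    refine Set.disjoint_left.mpr ?_
    rintro _ ⟨p, hp, rfl⟩ ⟨q, hq, h⟩
    have hpq := graft_inj (ne_nil_of_mem_rootWalks_diff hq.2) (ne_nil_of_mem_rootWalks_diff hp.2) h
    apply hne
    have hlen := hp.1.1
    rw [← hpq.1, hq.1.1] at hlen
    have := mem_antidiagonal.mp hkl
    have := mem_antidiagonal.mp hkl'
    ext <;> omega

end Counting

section SawCounts

open Finset.HasAntidiagonal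

variable {r : ℕ} {V : Fin r → Type} {G : ∀ i, SimpleGraph (V i)} {o : ∀ i, V i}

theorem sawCount_zero {W : Type*} (H : SimpleGraph W) (v : W) : sawCount H v 0 = 1 := by
  rw [sawCount_eq_ncard_walkTails, walkTails_zero, Set.ncard_singleton]

theorem sawCountVia_zero (i : Fin r) : sawCountVia G o i 0 = 0 := by
  rw [sawCountVia_eq, rootWalksVia_zero, Set.ncard_empty]

theorem sawCountVia_le_sawCount (hlf : ∀ i, LocFinite (G i)) (i : Fin r) (n : ℕ) :
    sawCountVia G o i n ≤ sawCount (freeProd G o) (fpRoot V o) n := by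
  rw [sawCountVia_eq, sawCount_freeProd_eq]
  exact Set.ncard_le_ncard (rootWalksVia_subset i n) (finite_rootWalks hlf n)

theorem sawCount_freeProd_succ (hlf : ∀ i, LocFinite (G i)) (n : ℕ) :
    sawCount (freeProd G o) (fpRoot V o) (n + 1) = ∑ i, sawCountVia G o i (n + 1) := by
  simp only [sawCount_freeProd_eq, sawCountVia_eq, ncard_rootWalks_succ hlf]

theorem sawCountVia_succ (hlf : ∀ i, LocFinite (G i)) (i : Fin r) (n : ℕ) :
    sawCountVia G o i (n + 1) = ∑ kl ∈ antidiagonal n, sawCount (G i) (o i) (kl.1 + 1) *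
      (sawCount (freeProd G o) (fpRoot V o) kl.2 - sawCountVia G o i kl.2) := by
  rw [sawCountVia_eq, ncard_rootWalksVia_succ hlf]
  refine Finset.sum_congr rfl fun kl _ => ?_
  rw [sawCount_freeProd_eq, sawCountVia_eq, sawCount_eq_ncard_walkTails]

theorem sawCount_le_sawCount_freeProd (hlf : ∀ i, LocFinite (G i)) (i : Fin r) (n : ℕ) :
    sawCount (G i) (o i) n ≤ sawCount (freeProd G o) (fpRoot V o) n := by
  rcases n with _ | n
  · rw [sawCount_zero, sawCount_zero]
  refine le_trans ?_ (sawCountVia_le_sawCount hlf i (n + 1))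
  rw [sawCountVia_succ hlf]
  refine le_of_eq_of_le ?_ (Finset.single_le_sum (fun _ _ => Nat.zero_le _)
    (mem_antidiagonal.mpr (add_zero n) : (n, 0) ∈ antidiagonal n))
  simp [sawCount_zero, sawCountVia_zero]

end SawCounts

section GeneratingFunctions

open Finset.HasAntidiagonal

theorem summable_norm_mul_pow_of_le {a b : ℕ → ℕ} {z : ℂ} {t : ℝ} (hab : ∀ n, a n ≤ b n)
    (hzt : ‖z‖ ≤ t) (hb : Summable fun n => (b n : ℝ) * t ^ n) :
    Summable fun n => ‖(a n : ℂ) * z ^ n‖ :=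
  hb.of_nonneg_of_le (fun _ => norm_nonneg _) fun n => by
    rw [norm_mul, norm_pow, Complex.norm_natCast]
    exact mul_le_mul (Nat.cast_le.mpr (hab n)) (pow_le_pow_left₀ (norm_nonneg z) hzt n)
      (by positivity) (Nat.cast_nonneg _)

theorem tsum_eq_one_add_sum_tsum {ι : Type*} [Fintype ι] {s : ℕ → ℂ} {b : ι → ℕ → ℂ}
    (hs0 : s 0 = 1) (hb0 : ∀ i, b i 0 = 0) (hs : ∀ n, s (n + 1) = ∑ i, b i (n + 1))
    (hb : ∀ i, Summable (b i)) : ∑' n, s n = 1 + ∑ i, ∑' n, b i n := by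
  have hs' : ∀ n, s n = (if n = 0 then 1 else 0) + ∑ i, b i n := by
    rintro (_ | n)
    · simp [hs0, hb0]
    · simp [hs]
  rw [tsum_congr hs',
    Summable.tsum_add (summable_of_ne_finset_zero (s := {0}) (by simp +contextual))
      (summable_sum fun i _ => hb i),
    tsum_ite_eq, Summable.tsum_finsetSum fun i _ => hb i]

theorem tsum_eq_tsum_shift_mul_tsum {a b c : ℕ → ℂ} (z : ℂ) (hc0 : c 0 = 0)
    (hc : ∀ n, c (n + 1) = ∑ kl ∈ antidiagonal n, a (kl.1 + 1) * b kl.2)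
    (ha : Summable fun n => ‖a (n + 1) * z ^ (n + 1)‖) (hb : Summable fun n => ‖b n * z ^ n‖)
    (hcz : Summable fun n => c n * z ^ n) :
    ∑' n, c n * z ^ n = (∑' n, a (n + 1) * z ^ (n + 1)) * ∑' n, b n * z ^ n := by
  rw [tsum_mul_tsum_eq_tsum_sum_antidiagonal_of_summable_norm ha hb, hcz.tsum_eq_zero_add, hc0,
    zero_mul, zero_add]
  refine tsum_congr fun n => ?_
  rw [hc, Finset.sum_mul]
  refine Finset.sum_congr rfl fun kl hkl => ?_
  rw [← mem_antidiagonal.mp hkl]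
  ring

theorem eq_one_div_one_sub_sum_div {ι K : Type*} [Fintype ι] [Field K] {M : K} {F B : ι → K}
    (hM : M = 1 + ∑ i, B i) (hB : ∀ i, B i = F i * (M - B i)) (hF : ∀ i, 1 + F i ≠ 0) :
    M = 1 / (1 - ∑ i, F i / (1 + F i)) := by
  have hB' : ∀ i, B i = F i / (1 + F i) * M := fun i => by
    rw [div_mul_eq_mul_div, eq_div_iff (hF i)]
    linear_combination hB i
  have h : M * (1 - ∑ i, F i / (1 + F i)) = 1 := by
    rw [Finset.sum_congr rfl fun i _ => hB' i, ← Finset.sum_mul] at hM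
    linear_combination hM
  rw [eq_div_iff (right_ne_zero_of_mul_eq_one h)]
  exact h

end GeneratingFunctions

theorem freeProd_functional_equation_general {r : ℕ}
    (V : Fin r → Type) (G : ∀ i, SimpleGraph (V i)) (o : ∀ i, V i)
    (hlf : ∀ i, LocFinite (G i))
    (z : ℂ)
    (hz : ∃ t : ℝ, ‖z‖ < t ∧
      Summable (fun n : ℕ => (sawCount (freeProd G o) (fpRoot V o) n : ℝ) * t ^ n))
    (hden : ∀ i, (1 : ℂ) + ∑' n : ℕ, (sawCount (G i) (o i) (n + 1) : ℂ) * z ^ (n + 1) ≠ 0) :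
    (∑' n : ℕ, (sawCount (freeProd G o) (fpRoot V o) n : ℂ) * z ^ n)
      = 1 / (1 - ∑ i : Fin r,
          (∑' n : ℕ, (sawCount (G i) (o i) (n + 1) : ℂ) * z ^ (n + 1))
            / (1 + ∑' n : ℕ, (sawCount (G i) (o i) (n + 1) : ℂ) * z ^ (n + 1))) := by
  obtain ⟨t, hzt, hsum⟩ := hz
  have hbound : ∀ a : ℕ → ℕ, (∀ n, a n ≤ sawCount (freeProd G o) (fpRoot V o) n) →
      Summable fun n => ‖(a n : ℂ) * z ^ n‖ :=
    fun a ha => summable_norm_mul_pow_of_le ha hzt.le hsum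
  have hvia i := hbound _ (sawCountVia_le_sawCount hlf i)
  have hrest i : Summable fun n =>
      ‖((sawCount (freeProd G o) (fpRoot V o) n : ℂ) - sawCountVia G o i n) * z ^ n‖ := by
    refine hbound _ (fun n => Nat.sub_le _ (sawCountVia G o i n)) |>.congr fun n => ?_
    rw [Nat.cast_sub (sawCountVia_le_sawCount hlf i n)]
  refine eq_one_div_one_sub_sum_div (B := fun i => ∑' n, (sawCountVia G o i n : ℂ) * z ^ n)
    ?_ (fun i => ?_) hden
  · refine tsum_eq_one_add_sum_tsum (by simp [sawCount_zero])
      (by simp [sawCountVia_zero]) (fun n => ?_) fun i => (hvia i).of_norm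
    rw [sawCount_freeProd_succ hlf, Nat.cast_sum, Finset.sum_mul]
  · rw [← Summable.tsum_sub (hbound _ fun _ => le_rfl).of_norm (hvia i).of_norm]
    simp only [← sub_mul]
    refine tsum_eq_tsum_shift_mul_tsum (a := fun n => (sawCount (G i) (o i) n : ℂ)) z
      (by simp [sawCountVia_zero]) (fun n => ?_)
      ((summable_nat_add_iff (f := fun n => ‖(sawCount (G i) (o i) n : ℂ) * z ^ n‖) 1).mpr
        (hbound _ (sawCount_le_sawCount_freeProd hlf i)))
      (hrest i) (hvia i).of_norm
    rw [sawCountVia_succ hlf]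
    push_cast [Nat.cast_sub (sawCountVia_le_sawCount hlf i _)]
    rfl

/-- Functional equation for the SAW generating function of a free product
`G = G₁ * ⋯ * G_r` of connected, locally finite, quasi-transitive rooted graphs with at
least two vertices each: for complex `z` with `|z|` strictly less than the radius of
convergence of `M` and `1 + Mᵢ(z) ≠ 0` for all `i`,
`M(z) = 1 / (1 − Σᵢ Mᵢ(z)/(1 + Mᵢ(z)))`. -/
theorem freeProd_functional_equation {r : ℕ} (hr : 2 ≤ r)
    (V : Fin r → Type) (G : ∀ i, SimpleGraph (V i)) (o : ∀ i, V i)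
    (hconn : ∀ i, (G i).Connected) (hqt : ∀ i, QuasiTransitive (G i))
    (hlf : ∀ i, LocFinite (G i)) (hnt : ∀ i, Nontrivial (V i))
    (z : ℂ)
    (hz : ∃ t : ℝ, ‖z‖ < t ∧
      Summable (fun n : ℕ => (sawCount (freeProd G o) (fpRoot V o) n : ℝ) * t ^ n))
    (hden : ∀ i, (1 : ℂ) + ∑' n : ℕ, (sawCount (G i) (o i) (n + 1) : ℂ) * z ^ (n + 1) ≠ 0) :
    (∑' n : ℕ, (sawCount (freeProd G o) (fpRoot V o) n : ℂ) * z ^ n)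
      = 1 / (1 - ∑ i : Fin r,
          (∑' n : ℕ, (sawCount (G i) (o i) (n + 1) : ℂ) * z ^ (n + 1))
            / (1 + ∑' n : ℕ, (sawCount (G i) (o i) (n + 1) : ℂ) * z ^ (n + 1))) :=
  freeProd_functional_equation_general V G o hlf z hz hden
end

section
/- Let Mᵢ, i = 1,…,r, be real power series with positive coefficients, analytic at z* > 0. Define D(z) = ∏ₖ(1 + Mₖ(z)) − Σᵢ Mᵢ(z)·∏_{j≠i}(1 + Mⱼ(z)). Then D'(z) = −Σᵢ Mᵢ(z)·Σ_{k≠i} Mₖ'(z)·∏_{l∉{i,k}}(1 + Mₗ(z)), and in particular D'(z) < 0 for all real z > 0 in the common domain of analyticity. -/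
/-!
Each `Mᵢ` is differentiated termwise inside its interval of convergence; the derivative series
has nonnegative terms and positive constant term, so `Mᵢ' > 0`. By the product rule, the terms
`Mᵢ' ∏_{j≠i} (1 + Mⱼ)` coming from the factor `Mᵢ` of the subtracted sum cancel exactly the
derivative of `∏ₖ (1 + Mₖ)`, leaving minus a sum of products of positive numbers; it is nonempty
because `r ≥ 2`.
-/

open Finset

section PowerSeries

variable {c : ℕ → ℝ} {s : ℝ}

theorem summable_abs_mul_succ_mul_pow (hs : Summable fun n => c n * s ^ (n + 1)) {t : ℝ}
    (ht : 0 ≤ t) (hts : t < s) : Summable fun n : ℕ => |c n| * ((n + 1) * t ^ n) := by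
  have hs0 : 0 < s := ht.trans_lt hts
  obtain ⟨C, hC⟩ := hs.tendsto_atTop_zero.abs.bddAbove_range
  have hC' : ∀ n, |c n| * s ^ (n + 1) ≤ C := fun n => by
    simpa [abs_mul, abs_of_pos hs0] using hC (Set.mem_range_self n)
  have hq : ‖t / s‖ < 1 := by
    rw [Real.norm_eq_abs, abs_of_nonneg (div_nonneg ht hs0.le), div_lt_one hs0]
    exact hts
  have hgeom : Summable fun n : ℕ => (C / s) * ((n + 1) * (t / s) ^ n) := by
    refine Summable.mul_left _ ?_
    simpa [add_mul] using
      (summable_pow_mul_geometric_of_norm_lt_one 1 hq).add (summable_geometric_of_norm_lt_one hq)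
  refine hgeom.of_nonneg_of_le (fun n => by positivity) fun n => ?_
  calc |c n| * ((n + 1) * t ^ n)
      = |c n| * s ^ (n + 1) * ((n + 1) * t ^ n / s ^ (n + 1)) := by field_simp
    _ ≤ C * ((n + 1) * t ^ n / s ^ (n + 1)) := by gcongr; exact hC' n
    _ = (C / s) * ((n + 1) * (t / s) ^ n) := by rw [div_pow, pow_succ]; field_simp

theorem hasDerivAt_tsum_mul_pow_succ (hs : Summable fun n => c n * s ^ (n + 1)) {z : ℝ}
    (hz : |z| < s) :
    HasDerivAt (fun y => ∑' n, c n * y ^ (n + 1)) (∑' n, c n * ((n + 1) * z ^ n)) z := by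
  obtain ⟨t, hzt, hts⟩ := exists_between hz
  have ht : 0 < t := (abs_nonneg z).trans_lt hzt
  have hu := summable_abs_mul_succ_mul_pow hs ht.le hts
  refine hasDerivAt_tsum_of_isPreconnected hu isOpen_Ioo isPreconnected_Ioo
    (fun n y _ => by simpa using (hasDerivAt_pow (n + 1) y).const_mul (c n))
    (fun n y hy => ?_) (y₀ := 0) (by simpa using ht) (by simp) (abs_lt.mp hzt)
  have hy : |y| ≤ t := (abs_lt.mpr hy).le
  rw [Real.norm_eq_abs, abs_mul, abs_mul, abs_pow, abs_of_nonneg (by positivity : (0:ℝ) ≤ n + 1)]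
  gcongr

theorem tsum_mul_succ_mul_pow_pos (hc : ∀ n, 0 < c n) (hs : Summable fun n => c n * s ^ (n + 1))
    {z : ℝ} (hz : 0 ≤ z) (hzs : z < s) : 0 < ∑' n, c n * ((n + 1) * z ^ n) := by
  have hsum : Summable fun n : ℕ => c n * ((n + 1) * z ^ n) := by
    simpa [abs_of_pos (hc _)] using summable_abs_mul_succ_mul_pow hs hz hzs
  exact hsum.tsum_pos (fun n => by have := hc n; positivity) 0 (by simpa using hc 0)

theorem exists_hasDerivAt_pos_of_hasSum {f : ℝ → ℝ} {R : ℝ} (hc : ∀ n, 0 < c n)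
    (hf : ∀ z ∈ Set.Ioo 0 R, HasSum (fun n => c n * z ^ (n + 1)) (f z)) {z : ℝ}
    (hz : z ∈ Set.Ioo 0 R) : ∃ d, HasDerivAt f d z ∧ 0 < d := by
  obtain ⟨s, hzs, hsR⟩ := exists_between hz.2
  have hs := (hf s ⟨hz.1.trans hzs, hsR⟩).summable
  have hf_eq : (fun y => ∑' n, c n * y ^ (n + 1)) =ᶠ[nhds z] f := by
    filter_upwards [isOpen_Ioo.mem_nhds hz] with y hy using (hf y hy).tsum_eq
  exact ⟨_, (hasDerivAt_tsum_mul_pow_succ hs (by rwa [abs_of_pos hz.1])).congr_of_eventuallyEq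
    hf_eq.symm, tsum_mul_succ_mul_pow_pos hc hs hz.1.le hzs⟩

theorem HasSum.pos_of_pos {β : Type*} [Nonempty β] {f : β → ℝ} {a : ℝ} (h : HasSum f a)
    (hf : ∀ n, 0 < f n) : 0 < a :=
  hasSum_lt (f := 0) (fun n => (hf n).le) (hf (Classical.arbitrary β)) hasSum_zero h

end PowerSeries

section Denominator

variable {ι : Type*} [Fintype ι] [DecidableEq ι]

def denominator {α R : Type*} [CommRing R] (F : ι → α → R) (w : α) : R :=
  ∏ k, (1 + F k w) - ∑ i, F i w * ∏ j ∈ univ.erase i, (1 + F j w)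

theorem hasDerivAt_denominator {𝕜 : Type*} [NontriviallyNormedField 𝕜] {F : ι → 𝕜 → 𝕜}
    {d : ι → 𝕜} {z : 𝕜} (hF : ∀ i, HasDerivAt (F i) (d i) z) :
    HasDerivAt (denominator F)
      (-∑ i, F i z * ∑ k ∈ univ.erase i, d k * ∏ l ∈ (univ.erase i).erase k, (1 + F l z)) z := by
  have hprod : ∀ s : Finset ι, HasDerivAt (fun w => ∏ k ∈ s, (1 + F k w))
      (∑ k ∈ s, d k * ∏ l ∈ s.erase k, (1 + F l z)) z := fun s => by
    simpa [mul_comm] using HasDerivAt.fun_finsetProd fun k (_ : k ∈ s) => (hF k).const_add 1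
  refine ((hprod univ).fun_sub (HasDerivAt.fun_sum fun i (_ : i ∈ univ) =>
    (hF i).mul (hprod (univ.erase i)))).congr_deriv ?_
  rw [sum_add_distrib, ← sub_sub, sub_self, zero_sub]

theorem sum_mul_sum_erase_mul_prod_erase_pos {R : Type*} [CommSemiring R] [PartialOrder R]
    [IsStrictOrderedRing R] [Nontrivial ι] {x y : ι → R} (hx : ∀ i, 0 < x i) (hy : ∀ i, 0 < y i) :
    0 < ∑ i, x i * ∑ k ∈ univ.erase i, y k * ∏ l ∈ (univ.erase i).erase k, (1 + x l) := by
  have h1x : ∀ l, 0 < 1 + x l := fun l => add_pos zero_lt_one (hx l)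
  refine sum_pos (fun i _ => mul_pos (hx i) (sum_pos (fun k _ => ?_) ?_)) univ_nonempty
  · exact mul_pos (hy k) (prod_pos fun l _ => h1x l)
  · exact univ_nontrivial.erase_nonempty

end Denominator

theorem deriv_denominator_neg_general (r : ℕ) (hr : 2 ≤ r) (R : ℝ)
    (M : Fin r → ℝ → ℝ) (a : Fin r → ℕ → ℝ)
    (ha : ∀ i n, 0 < a i (n + 1))
    (hM : ∀ i, ∀ z ∈ Set.Ioo (0 : ℝ) R,
      HasSum (fun n : ℕ => a i (n + 1) * z ^ (n + 1)) (M i z)) :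
    ∀ z ∈ Set.Ioo (0 : ℝ) R,
      deriv (fun w => ∏ k, (1 + M k w)
          - ∑ i, M i w * ∏ j ∈ Finset.univ.erase i, (1 + M j w)) z
        = -∑ i, M i z * ∑ k ∈ Finset.univ.erase i,
            deriv (M k) z * ∏ l ∈ (Finset.univ.erase i).erase k, (1 + M l z) ∧
      deriv (fun w => ∏ k, (1 + M k w)
          - ∑ i, M i w * ∏ j ∈ Finset.univ.erase i, (1 + M j w)) z < 0 := by
  intro z hz
  have : Nontrivial (Fin r) := Fin.nontrivial_iff_two_le.mpr hr
  choose d hd hd_pos using fun i => exists_hasDerivAt_pos_of_hasSum (ha i) (hM i) hz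
  have hM_pos : ∀ i, 0 < M i z := fun i =>
    (hM i z hz).pos_of_pos fun n => mul_pos (ha i n) (pow_pos hz.1 _)
  have hD : deriv (denominator M) z = _ := (hasDerivAt_denominator hd).deriv
  simp only [(hd _).deriv]
  exact ⟨hD, hD ▸ neg_neg_of_pos (sum_mul_sum_erase_mul_prod_erase_pos hM_pos hd_pos)⟩

/-- Let `Mᵢ`, `i = 1,…,r` (`r ≥ 2`), be real power series with positive coefficients and
zero constant term, convergent on `(0, R)`. With
`D(z) = ∏ₖ(1 + Mₖ(z)) − Σᵢ Mᵢ(z)·∏_{j≠i}(1 + Mⱼ(z))` we have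
`D'(z) = −Σᵢ Mᵢ(z)·Σ_{k≠i} Mₖ'(z)·∏_{l∉{i,k}}(1 + Mₗ(z))`, and in particular `D'(z) < 0`
for all real `z > 0` in the common domain of analyticity. -/
theorem deriv_denominator_neg (r : ℕ) (hr : 2 ≤ r) (R : ℝ) (hR : 0 < R)
    (M : Fin r → ℝ → ℝ) (a : Fin r → ℕ → ℝ)
    (ha : ∀ i n, 0 < a i (n + 1))
    (hM : ∀ i, ∀ z ∈ Set.Ioo (0 : ℝ) R,
      HasSum (fun n : ℕ => a i (n + 1) * z ^ (n + 1)) (M i z)) :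
    ∀ z ∈ Set.Ioo (0 : ℝ) R,
      deriv (fun w => ∏ k, (1 + M k w)
          - ∑ i, M i w * ∏ j ∈ Finset.univ.erase i, (1 + M j w)) z
        = -∑ i, M i z * ∑ k ∈ Finset.univ.erase i,
            deriv (M k) z * ∏ l ∈ (Finset.univ.erase i).erase k, (1 + M l z) ∧
      deriv (fun w => ∏ k, (1 + M k w)
          - ∑ i, M i w * ∏ j ∈ Finset.univ.erase i, (1 + M j w)) z < 0 :=
  deriv_denominator_neg_general r hr R M a ha hM
end

section
/- Let f(z) = Σ aₙ zⁿ be a power series with nonnegative real coefficients and radius of convergence R ∈ (0, ∞]. Suppose f extends to a function of the form a₀/(z − z*) + h(z) with h analytic on a disc of radius > z* around z* and a₀ ≠ 0, and z* < R' with f analytic on {|z| ≤ z*} \ {z*}. Then aₙ ∼ A·(1/z*)ⁿ for the constant A = −a₀/z* (in particular aₙ·z*ⁿ converges to a nonzero constant). -/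
/-!
The pole expands as a geometric series, `c / (z - w) = ∑ -c / w ^ (n + 1) * z ^ n` for
`‖z‖ < ‖w‖`, and the regular part `h` has a power series `∑ bₙ zⁿ` converging on a disc
strictly larger than `‖w‖`. Uniqueness of power series coefficients gives
`aₙ = -c / w ^ (n + 1) + bₙ`, so `aₙ wⁿ = -c / w + bₙ wⁿ`, and `bₙ wⁿ → 0` because
`∑ bₙ wⁿ` converges.
-/

open Filter Topology FormalMultilinearSeries
open scoped ENNReal NNReal

section PowerSeries

variable {𝕜 : Type*} [NontriviallyNormedField 𝕜]

theorem HasFPowerSeriesOnBall.hasSum_coeff_mul_pow {f : 𝕜 → 𝕜}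
    {p : FormalMultilinearSeries 𝕜 𝕜 𝕜} {r : ℝ≥0∞} (hf : HasFPowerSeriesOnBall f p 0 r) {z : 𝕜}
    (hz : ‖z‖ₑ < r) : HasSum (fun n => p.coeff n * z ^ n) (f z) := by
  simpa [apply_eq_pow_smul_coeff, mul_comm] using hf.hasSum (by simpa using hz)

theorem hasFPowerSeriesAt_ofScalars_of_eventually_hasSum {f : 𝕜 → 𝕜} {a : ℕ → 𝕜}
    (ha : ∀ᶠ z in 𝓝 0, HasSum (fun n => a n * z ^ n) (f z)) :
    HasFPowerSeriesAt f (ofScalars 𝕜 a) 0 := by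
  rw [hasFPowerSeriesAt_iff]
  simpa [coeff_ofScalars, mul_comm] using ha

theorem eq_of_eventually_hasSum_mul_pow {f : 𝕜 → 𝕜} {a b : ℕ → 𝕜}
    (ha : ∀ᶠ z in 𝓝 0, HasSum (fun n => a n * z ^ n) (f z))
    (hb : ∀ᶠ z in 𝓝 0, HasSum (fun n => b n * z ^ n) (f z)) : a = b :=
  ofScalars_series_injective 𝕜 𝕜 <|
    (hasFPowerSeriesAt_ofScalars_of_eventually_hasSum ha).eq_formalMultilinearSeries
      (hasFPowerSeriesAt_ofScalars_of_eventually_hasSum hb)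

theorem hasSum_div_sub_mul_pow (c : 𝕜) {w z : 𝕜} (hz : ‖z‖ < ‖w‖) :
    HasSum (fun n => -c / w ^ (n + 1) * z ^ n) (c / (z - w)) := by
  have hw : w ≠ 0 := norm_pos_iff.1 ((norm_nonneg z).trans_lt hz)
  have hzw : ‖z / w‖ < 1 := by rwa [norm_div, div_lt_one ((norm_nonneg z).trans_lt hz)]
  have hsub : w - z ≠ 0 := sub_ne_zero.2 fun hwz => by simp [hwz] at hz
  have hsum : -c / w * (1 - z / w)⁻¹ = c / (z - w) := by
    rw [one_sub_div hw, inv_div, ← neg_sub w z, div_neg]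
    field_simp
  have hterm (n : ℕ) : -c / w * (z / w) ^ n = -c / w ^ (n + 1) * z ^ n := by
    rw [div_pow, pow_succ]
    field_simp
  simpa only [hsum, hterm] using (hasSum_geometric_of_norm_lt_one hzw).mul_left (-c / w)

theorem tendsto_mul_pow_of_hasSum_eq_div_sub_add {a : ℕ → 𝕜} {h : 𝕜 → 𝕜}
    {p : FormalMultilinearSeries 𝕜 𝕜 𝕜} {r : ℝ≥0∞} {c w : 𝕜} (hw : w ≠ 0)
    (hp : HasFPowerSeriesOnBall h p 0 r) (hwr : ‖w‖ₑ < r)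
    (ha : ∀ z, ‖z‖ < ‖w‖ → HasSum (fun n => a n * z ^ n) (c / (z - w) + h z)) :
    Tendsto (fun n => a n * w ^ n) atTop (𝓝 (-c / w)) := by
  have hball : ∀ᶠ z in 𝓝 (0 : 𝕜), ‖z‖ < ‖w‖ := by
    filter_upwards [Metric.ball_mem_nhds 0 (norm_pos_iff.2 hw)] with z hz
    simpa using hz
  have hcoeff : a = fun n => -c / w ^ (n + 1) + p.coeff n := by
    refine eq_of_eventually_hasSum_mul_pow (hball.mono ha) (hball.mono fun z hz => ?_)
    simp_rw [add_mul]
    exact (hasSum_div_sub_mul_pow c hz).add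
      (hp.hasSum_coeff_mul_pow ((enorm_le_iff_norm_le.2 hz.le).trans_lt hwr))
  have hrem : Tendsto (fun n => p.coeff n * w ^ n) atTop (𝓝 0) :=
    (hp.hasSum_coeff_mul_pow hwr).summable.tendsto_atTop_zero
  convert hrem.const_add (-c / w) using 2 with n
  · rw [hcoeff, add_mul, pow_succ]
    field_simp
  · rw [add_zero]

end PowerSeries

theorem singularity_analysis_transfer_general (a : ℕ → ℝ) (zs : ℝ) (hzs : 0 < zs)
    (c : ℝ) (hc : c ≠ 0) (h : ℂ → ℂ) (R' : ℝ) (hR' : zs < R')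
    (hh : AnalyticOn ℂ h (Metric.ball 0 R'))
    (hrep : ∀ z : ℂ, ‖z‖ < zs →
      HasSum (fun n : ℕ => (a n : ℂ) * z ^ n) ((c : ℂ) / (z - (zs : ℂ)) + h z)) :
    Tendsto (fun n : ℕ => a n * zs ^ n) atTop (𝓝 (-c / zs)) ∧ -c / zs ≠ 0 := by
  obtain ⟨r, hzsr, hrR'⟩ := exists_between hR'
  lift r to ℝ≥0 using (hzs.trans hzsr).le
  have hp := (hh.differentiableOn.mono (Metric.closedBall_subset_ball hrR')).hasFPowerSeriesOnBall
    (by exact_mod_cast hzs.trans hzsr)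
  have hnorm : ‖(zs : ℂ)‖ = zs := by simp [hzs.le]
  have hzs_lt_r : ‖(zs : ℂ)‖ₑ < r := by
    rw [enorm_eq_nnnorm, ENNReal.coe_lt_coe, ← NNReal.coe_lt_coe, coe_nnnorm, hnorm]
    exact hzsr
  have hlim := tendsto_mul_pow_of_hasSum_eq_div_sub_add (mod_cast hzs.ne') hp hzs_lt_r
    fun z hz => hrep z (hnorm ▸ hz)
  refine ⟨?_, div_ne_zero (neg_ne_zero.2 hc) hzs.ne'⟩
  rw [← tendsto_ofReal_iff]
  push_cast
  exact hlim

/-- Singularity analysis transfer: let `f(z) = Σ aₙ zⁿ` be a power series with nonnegative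
real coefficients which extends to `a₀/(z − z*) + h(z)` with `a₀ ≠ 0` and `h` analytic on a
disc of radius `R' > z*` around the origin. Then `aₙ ∼ A·(1/z*)ⁿ` with `A = −a₀/z*`;
in particular `aₙ·z*ⁿ` converges to the nonzero constant `A`. -/
theorem singularity_analysis_transfer (a : ℕ → ℝ) (zs : ℝ) (hzs : 0 < zs)
    (c : ℝ) (hc : c ≠ 0) (h : ℂ → ℂ) (R' : ℝ) (hR' : zs < R')
    (hh : AnalyticOn ℂ h (Metric.ball 0 R'))
    (ha : ∀ n, 0 ≤ a n)
    (hrep : ∀ z : ℂ, ‖z‖ < zs →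
      HasSum (fun n : ℕ => (a n : ℂ) * z ^ n) ((c : ℂ) / (z - (zs : ℂ)) + h z)) :
    Tendsto (fun n : ℕ => a n * zs ^ n) atTop (𝓝 (-c / zs)) ∧ -c / zs ≠ 0 :=
  singularity_analysis_transfer_general a zs hzs c hc h R' hR' hh hrep
end
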